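/- For every strictly increasing function g : ℝ → ℝ and every bijection h : ℝ^p → ℝ^p that is Borel measurable with Borel measurable inverse, Λ( g∘Y | h∘X ) = Λ(Y|X). -/

import Mathlib

open MeasureTheory ProbabilityTheory Set Filter Topology

/-- The (nonparametric) relative effect `Ψ(μ, ν) = ∫ μ((-∞,y)) + (1/2) μ({y}) dν(y)`. -/
noncomputable def relEffect (μ ν : Measure ℝ) : ℝ :=
  ∫ y, ((μ (Set.Iio y)).toReal + (1 / 2) * (μ {y}).toReal) ∂ν

/-- `α(μ) = 1 - ∫ μ({x}) dμ(x) = 1 - P(X = X*)`, the non-discrete mass of `μ`. -/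
noncomputable def alphaCoeff {E : Type*} [MeasurableSpace E] (μ : Measure E) : ℝ :=
  1 - ∫ x, (μ {x}).toReal ∂μ

/-- The coefficient of separation `Λ(Y|X)`. -/
noncomputable def sepCoeff {Ω E : Type*} [MeasurableSpace Ω] [MeasurableSpace E]
    (P : Measure Ω) [IsFiniteMeasure P] (Y : Ω → ℝ) (X : Ω → E) : ℝ :=
  (alphaCoeff (P.map X))⁻¹ *
    ∫ x : E × E,
      (relEffect (condDistrib Y X P x.1) (condDistrib Y X P x.2)
        - relEffect (condDistrib Y X P x.2) (condDistrib Y X P x.1)) ^ 2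
      ∂((P.map X).prod (P.map X))

/-- A random variable is non-degenerate if it is not a.s. constant. -/
def Nondegenerate {Ω α : Type*} [MeasurableSpace Ω] (P : Measure Ω) (Z : Ω → α) : Prop :=
  ¬ ∃ c, ∀ᵐ ω ∂P, Z ω = c

/-! The law of `g (Y)` given `h (X)`, evaluated at `h x`, is the push-forward by `g` of the law
of `Y` given `X = x`: this follows from the a.e. uniqueness of disintegrations, because `h` has a
measurable left inverse (a measurable injection of a Polish space is a measurable embedding).
Hence every relative effect in `Λ` is unchanged, as a strictly increasing `g` preserves both `<`
and `=`, and a change of variables along `h` (resp. `h × h`) turns `α` and the outer integral for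
`h (X)` into those for `X`. -/

lemma MeasureTheory.Measure.map_prodMap_id_compProd {β β' γ : Type*} [MeasurableSpace β]
    [MeasurableSpace β'] [MeasurableSpace γ] (ν : Measure β) [SFinite ν]
    (η : Kernel β γ) [IsSFiniteKernel η] {f : β → β'} {f' : β' → β} (hf : Measurable f)
    (hf' : Measurable f') (hinv : Function.LeftInverse f' f) :
    (ν ⊗ₘ η).map (Prod.map f id) = ν.map f ⊗ₘ η.comap f' hf' := by
  ext s hs
  rw [Measure.map_apply (hf.prodMap measurable_id) hs, Measure.compProd_apply hs,
    Measure.compProd_apply (hf.prodMap measurable_id hs),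
    lintegral_map (Kernel.measurable_kernel_prodMk_left hs) hf]
  refine lintegral_congr fun x => ?_
  rw [Kernel.comap_apply, hinv x]
  rfl

lemma relEffect_map_of_strictMono (μ ν : Measure ℝ) {g : ℝ → ℝ} (hg : StrictMono g) :
    relEffect (μ.map g) (ν.map g) = relEffect μ ν := by
  have hemb : MeasurableEmbedding g := hg.monotone.measurable.measurableEmbedding hg.injective
  have hIio (y : ℝ) : g ⁻¹' Iio (g y) = Iio y := by ext; simp [hg.lt_iff_lt]
  have hsingleton (y : ℝ) : g ⁻¹' {g y} = {y} := by ext; simp [hg.injective.eq_iff]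
  unfold relEffect
  simp only [hemb.integral_map, hemb.map_apply, hIio, hsingleton]

lemma alphaCoeff_map_of_measurableEmbedding {E E' : Type*} [MeasurableSpace E]
    [MeasurableSpace E'] (μ : Measure E) {f : E → E'} (hf : MeasurableEmbedding f) :
    alphaCoeff (μ.map f) = alphaCoeff μ := by
  have hsingleton (x : E) : f ⁻¹' {f x} = {x} := by ext; simp [hf.injective.eq_iff]
  unfold alphaCoeff
  simp only [hf.integral_map, hf.map_apply, hsingleton]

namespace ProbabilityTheory

variable {α β β' Ω' Ω'' : Type*} [MeasurableSpace α] [MeasurableSpace β] [MeasurableSpace β']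
  [MeasurableSpace Ω'] [StandardBorelSpace Ω'] [Nonempty Ω'] [MeasurableSpace Ω'']
  [StandardBorelSpace Ω''] [Nonempty Ω''] {μ : Measure α} [IsFiniteMeasure μ]
  {X : α → β} {Y : α → Ω'}

lemma condDistrib_comp_measurableEmbedding_apply [Nonempty β] (hX : AEMeasurable X μ)
    (hY : AEMeasurable Y μ) {f : β → β'} (hf : MeasurableEmbedding f) :
    ∀ᵐ x ∂μ.map X, condDistrib Y (f ∘ X) μ (f x) = condDistrib Y X μ x := by
  have hmapX : μ.map (f ∘ X) = (μ.map X).map f :=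
    (hf.measurable.aemeasurable.map_map_of_aemeasurable hX).symm
  have hjoint : μ.map (fun a => ((f ∘ X) a, Y a))
      = μ.map (f ∘ X) ⊗ₘ (condDistrib Y X μ).comap hf.invFun hf.measurable_invFun := by
    rw [hmapX, ← Measure.map_prodMap_id_compProd _ _ hf.measurable hf.measurable_invFun
      hf.leftInverse_invFun, compProd_map_condDistrib hY,
      (hf.measurable.prodMap measurable_id).aemeasurable.map_map_of_aemeasurable (hX.prodMk hY)]
    rfl
  have hae := condDistrib_ae_eq_of_measure_eq_compProd (f ∘ X) hY hjoint
  rw [hmapX] at hae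
  filter_upwards [ae_of_ae_map hf.measurable.aemeasurable hae] with x hx
  rw [hx, Kernel.comap_apply, hf.leftInverse_invFun x]

lemma condDistrib_comp_comp_measurableEmbedding_apply [Nonempty β] (hX : AEMeasurable X μ)
    (hY : AEMeasurable Y μ) {f : β → β'} (hf : MeasurableEmbedding f) {g : Ω' → Ω''}
    (hg : Measurable g) :
    ∀ᵐ x ∂μ.map X, condDistrib (g ∘ Y) (f ∘ X) μ (f x) = (condDistrib Y X μ x).map g := by
  have hcomp : condDistrib (g ∘ Y) (f ∘ X) μ =ᵐ[μ.map (f ∘ X)] (condDistrib Y (f ∘ X) μ).map g :=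
    condDistrib_comp _ hY hg
  rw [← hf.measurable.aemeasurable.map_map_of_aemeasurable hX] at hcomp
  filter_upwards [ae_of_ae_map hf.measurable.aemeasurable hcomp,
    condDistrib_comp_measurableEmbedding_apply hX hY hf] with x hcomp_x hx
  rw [hcomp_x, Kernel.map_apply _ hg, hx]

end ProbabilityTheory

theorem sepCoeff_comp_of_strictMono_of_measurableEmbedding {Ω E E' : Type*} [MeasurableSpace Ω]
    [MeasurableSpace E] [MeasurableSpace E'] [Nonempty E] (P : Measure Ω) [IsFiniteMeasure P]
    {X : Ω → E} {Y : Ω → ℝ} (hX : AEMeasurable X P) (hY : AEMeasurable Y P)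
    {g : ℝ → ℝ} (hg : StrictMono g) {f : E → E'} (hf : MeasurableEmbedding f) :
    sepCoeff P (g ∘ Y) (f ∘ X) = sepCoeff P Y X := by
  set μ := P.map X
  have hmapX : P.map (f ∘ X) = μ.map f :=
    (hf.measurable.aemeasurable.map_map_of_aemeasurable hX).symm
  have hκ := condDistrib_comp_comp_measurableEmbedding_apply hX hY hf hg.monotone.measurable
  have hκ_pair : ∀ᵐ z ∂μ.prod μ,
      condDistrib (g ∘ Y) (f ∘ X) P (f z.1) = (condDistrib Y X P z.1).map g ∧
      condDistrib (g ∘ Y) (f ∘ X) P (f z.2) = (condDistrib Y X P z.2).map g :=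
    (Measure.quasiMeasurePreserving_fst.ae hκ).and (Measure.quasiMeasurePreserving_snd.ae hκ)
  unfold sepCoeff
  rw [hmapX, alphaCoeff_map_of_measurableEmbedding μ hf,
    Measure.map_prod_map μ μ hf.measurable hf.measurable, (hf.prodMap hf).integral_map]
  congr 1
  refine integral_congr_ae ?_
  filter_upwards [hκ_pair] with z ⟨h₁, h₂⟩
  simp only [Prod.map_fst, Prod.map_snd, h₁, h₂, relEffect_map_of_strictMono _ _ hg]

theorem sepCoeff_invariance_strictMono_bijective_general
    {Ω : Type*} [MeasurableSpace Ω] {p : ℕ}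
    (P : Measure Ω) [IsProbabilityMeasure P]
    (X : Ω → (Fin p → ℝ)) (Y : Ω → ℝ)
    (hX : Measurable X) (hY : Measurable Y)
    (g : ℝ → ℝ) (hg : StrictMono g)
    (h : (Fin p → ℝ) → (Fin p → ℝ)) (hbij : Function.Bijective h)
    (hh : Measurable h) :
    sepCoeff P (g ∘ Y) (h ∘ X) = sepCoeff P Y X :=
  sepCoeff_comp_of_strictMono_of_measurableEmbedding P hX.aemeasurable hY.aemeasurable hg
    (hh.measurableEmbedding hbij.injective)

/-- Invariance of `Λ` under strictly increasing transformations of the response and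
bijective bimeasurable transformations of the predictor vector. -/
theorem sepCoeff_invariance_strictMono_bijective
    {Ω : Type*} [MeasurableSpace Ω] {p : ℕ} (hp : 1 ≤ p)
    (P : Measure Ω) [IsProbabilityMeasure P]
    (X : Ω → (Fin p → ℝ)) (Y : Ω → ℝ)
    (hX : Measurable X) (hY : Measurable Y)
    (hXnd : ∃ k, Nondegenerate P fun ω => X ω k)
    (hYnd : Nondegenerate P Y)
    (g : ℝ → ℝ) (hg : StrictMono g)
    (h : (Fin p → ℝ) → (Fin p → ℝ)) (hbij : Function.Bijective h)
    (hh : Measurable h) (hhinv : Measurable (Function.invFun h)) :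
    sepCoeff P (g ∘ Y) (h ∘ X) = sepCoeff P Y X :=
  sepCoeff_invariance_strictMono_bijective_general P X Y hX hY g hg h hbij hh
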